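/- arXiv:math/9804153 — 2 statements merged into one kernel-verified Lean document; each statement's English description precedes it below -/
import Mathlib

section
/- ♣_w implies ♣_{w²}. -/
open Cardinal Set

/-- The first uncountable ordinal. -/
noncomputable def ω₁ : Ordinal := (aleph 1).ord

/-- The set of limit ordinals below `ω₁`. -/
def LimOmega1 : Set Ordinal := {γ | γ < ω₁ ∧ Order.IsSuccLimit γ}

/-- `C` is a club (closed unbounded) subset of `ω₁`. -/
def IsClubIn (C : Set Ordinal) : Prop :=
  C ⊆ Iio ω₁ ∧
    (∀ δ, δ < ω₁ → δ ≠ 0 → (∀ α < δ, ∃ β ∈ C, α < β ∧ β < δ) → δ ∈ C) ∧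
    (∀ α < ω₁, ∃ β ∈ C, α < β)

/-- `S` is a stationary subset of `ω₁`: it meets every club subset of `ω₁`. -/
def IsStatIn (S : Set Ordinal) : Prop :=
  S ⊆ Iio ω₁ ∧ ∀ C, IsClubIn C → (S ∩ C).Nonempty

/-- The set of ordinals `s` has order type `ω`. -/
def HasOtpOmega (s : Set Ordinal) : Prop :=
  Ordinal.type (Subrel ((· < ·) : Ordinal → Ordinal → Prop) (· ∈ s)) = Ordinal.omega0

/-- `x γ` is a cofinal subset of `γ` of order type `ω`. -/
def IsLadderAt (γ : Ordinal) (s : Set Ordinal) : Prop :=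
  s ⊆ Iio γ ∧ (∀ α < γ, ∃ β ∈ s, α ≤ β) ∧ HasOtpOmega s

/-- `(x γ)_{γ ∈ Lim(ω₁)}` is a `♣_w`-sequence. -/
def ClubWSeq (x : Ordinal → Set Ordinal) : Prop :=
  (∀ γ ∈ LimOmega1, IsLadderAt γ (x γ)) ∧
    ∀ y : Set Ordinal, y ⊆ Iio ω₁ → #y = aleph 1 →
      ∃ γ ∈ LimOmega1, (x γ \ y).Finite

/-- `(x γ)_{γ ∈ Lim(ω₁)}` is a `♣_{w²}`-sequence. -/
def ClubW2Seq (x : Ordinal → Set Ordinal) : Prop :=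
  (∀ γ ∈ LimOmega1, IsLadderAt γ (x γ)) ∧
    ∀ y : Set Ordinal, y ⊆ Iio ω₁ → #y = aleph 1 →
      IsStatIn ({α ∈ LimOmega1 | (x α ∩ y).Finite} ∪ {α ∈ LimOmega1 | (x α \ y).Finite})

/-!
Let `C` be a club and `y ⊆ ω₁` of size `ℵ₁`. Clubs are uncountable, so `C ∩ y` or `C \ y` has
size `ℵ₁`, and the `♣_w`-sequence almost contains it at some limit `γ`: then `x γ` is almost
contained in `y` or almost disjoint from it, and `γ ∈ C` because `x γ` is cofinal in `γ` and `C`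
is closed. So the `♣_w`-sequence is itself a `♣_{w²}`-sequence.

The hypothesis and the conclusion live in unrelated universes, so the sequence is pulled back
along `Ordinal.lift` to `Ordinal.{0}` and the resulting sequence pushed forward again; `lift` is an
initial segment embedding fixing `ω₁`, so it preserves all the notions involved.
-/

universe u v

lemma omega1_eq_omega_one : ω₁ = Ordinal.omega 1 := Cardinal.ord_aleph 1

lemma mk_le_aleph_one_of_subset_Iio {s : Set Ordinal} (hs : s ⊆ Iio ω₁) : #s ≤ ℵ₁ := by
  refine (mk_le_mk_of_subset hs).trans ?_
  rw [Cardinal.mk_Iio_ordinal, ω₁, Cardinal.card_ord, Cardinal.lift_aleph, Ordinal.lift_one]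

lemma mk_inter_eq_or_mk_diff_eq {α : Type*} {κ : Cardinal} (hκ : ℵ₀ ≤ κ) {s : Set α}
    (hs : #s = κ) (t : Set α) : #(↥(s ∩ t)) = κ ∨ #(↥(s \ t)) = κ := by
  by_contra! h
  have hinter : #(↥(s ∩ t)) < κ := (hs ▸ mk_le_mk_of_subset inter_subset_left).lt_of_ne h.1
  have hdiff : #(↥(s \ t)) < κ := (hs ▸ mk_le_mk_of_subset sdiff_subset).lt_of_ne h.2
  have hle : #s ≤ #(↥(s ∩ t)) + #(↥(s \ t)) := by
    simpa only [inter_union_sdiff] using mk_union_le (s ∩ t) (s \ t)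
  exact (hle.trans_lt (add_lt_of_lt hκ hinter hdiff)).ne hs

lemma IsClubIn.not_countable {C : Set Ordinal} (hC : IsClubIn C) : ¬ C.Countable := by
  intro hcount
  have := hcount.to_subtype
  have hsup : ⨆ β : C, (β : Ordinal) < ω₁ := by
    rw [omega1_eq_omega_one]
    exact Ordinal.iSup_lt_omega_one fun β => omega1_eq_omega_one ▸ hC.1 β.2
  obtain ⟨β, hβC, hβ⟩ := hC.2.2 _ hsup
  exact hβ.not_ge (Ordinal.le_iSup (fun β : C => (β : Ordinal)) ⟨β, hβC⟩)

lemma IsClubIn.mk_eq {C : Set Ordinal} (hC : IsClubIn C) : #C = ℵ₁ :=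
  (mk_le_aleph_one_of_subset_Iio hC.1).antisymm
    (not_lt.1 fun h => hC.not_countable (le_aleph0_iff_set_countable.1 (lt_aleph_one_iff.1 h)))

lemma IsClubIn.mem_of_diff_finite {C : Set Ordinal} (hC : IsClubIn C) {γ : Ordinal}
    (hγ : γ ∈ LimOmega1) {s : Set Ordinal} (hs : s ⊆ Iio γ) (hcof : ∀ α < γ, ∃ β ∈ s, α ≤ β)
    (hfin : (s \ C).Finite) : γ ∈ C := by
  refine hC.2.1 γ hγ.1 hγ.2.pos.ne' fun α hα => ?_
  set F := insert α (s \ C)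
  have hFγ : sSup F < γ := by
    refine insert_subset hα (sdiff_subset.trans hs) ((insert_nonempty _ _).csSup_mem ?_)
    exact hfin.insert α
  have hleF : ∀ z ∈ F, z ≤ sSup F := fun z => le_csSup (hfin.insert α).bddAbove
  obtain ⟨β, hβs, hβ⟩ := hcof _ (hγ.2.succ_lt hFγ)
  have hFβ : sSup F < β := (Order.lt_succ _).trans_le hβ
  refine ⟨β, by_contra fun hβC => ?_, (hleF α (mem_insert _ _)).trans_lt hFβ, hs hβs⟩
  exact hFβ.not_ge (hleF β (mem_insert_of_mem _ ⟨hβs, hβC⟩))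

lemma ClubWSeq.exists_mem_club {x : Ordinal → Set Ordinal} (hx : ClubWSeq x) {C : Set Ordinal}
    (hC : IsClubIn C) {z : Set Ordinal} (hzC : z ⊆ C) (hz : #z = ℵ₁) :
    ∃ γ ∈ LimOmega1, γ ∈ C ∧ (x γ \ z).Finite := by
  obtain ⟨γ, hγ, hfin⟩ := hx.2 z (hzC.trans hC.1) hz
  have hladder := hx.1 γ hγ
  refine ⟨γ, hγ, hC.mem_of_diff_finite hγ hladder.1 hladder.2.1 ?_, hfin⟩
  exact hfin.subset (sdiff_subset_sdiff_right hzC)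

theorem ClubWSeq.clubW2Seq {x : Ordinal → Set Ordinal} (hx : ClubWSeq x) : ClubW2Seq x := by
  refine ⟨hx.1, fun y _ _ => ⟨?_, fun C hC => ?_⟩⟩
  · rintro α (hα | hα) <;> exact hα.1.1
  rcases mk_inter_eq_or_mk_diff_eq (aleph0_le_aleph 1) hC.mk_eq y with hinter | hdiff
  · obtain ⟨γ, hγ, hγC, hfin⟩ := hx.exists_mem_club hC inter_subset_left hinter
    exact ⟨γ, Or.inr ⟨hγ, hfin.subset (sdiff_subset_sdiff_right inter_subset_right)⟩, hγC⟩
  · obtain ⟨γ, hγ, hγC, hfin⟩ := hx.exists_mem_club hC sdiff_subset hdiff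
    exact ⟨γ, Or.inl ⟨hγ, hfin.subset fun β hβ => ⟨hβ.1, fun h => h.2 hβ.2⟩⟩, hγC⟩

lemma Ordinal.lift_injective : Function.Injective Ordinal.lift.{v, u} :=
  fun _ _ => Ordinal.lift_inj.1

lemma lift_omega1 : Ordinal.lift.{v} ω₁.{u} = ω₁.{max u v} := by
  simp only [omega1_eq_omega_one, Ordinal.lift_omega, Ordinal.lift_one]

lemma lift_lt_omega1 {o : Ordinal.{u}} : Ordinal.lift.{v} o < ω₁ ↔ o < ω₁ := by
  rw [← lift_omega1.{u, v}, Ordinal.lift_lt]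

lemma mem_range_lift_of_lt_omega1 {γ : Ordinal.{max u v}} (h : γ < ω₁) :
    γ ∈ range Ordinal.lift.{v, u} :=
  Ordinal.mem_range_lift_of_le (h.le.trans_eq lift_omega1.symm)

lemma image_preimage_lift_of_subset_Iio {γ : Ordinal.{u}} {s : Set Ordinal.{max u v}}
    (hs : s ⊆ Iio (Ordinal.lift.{v} γ)) : Ordinal.lift.{v} '' (Ordinal.lift ⁻¹' s) = s :=
  image_preimage_eq_of_subset fun _ hβ => Ordinal.mem_range_lift_of_le (hs hβ).le

lemma lift_mem_limOmega1 {γ : Ordinal.{u}} :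
    Ordinal.lift.{v} γ ∈ LimOmega1 ↔ γ ∈ LimOmega1 := by
  simp only [LimOmega1, mem_ofPred_eq, lift_lt_omega1, Ordinal.isSuccLimit_lift]

lemma image_lift_subset_Iio_omega1 {s : Set Ordinal.{u}} :
    Ordinal.lift.{v} '' s ⊆ Iio ω₁ ↔ s ⊆ Iio ω₁ := by
  simp only [subset_def, forall_mem_image, mem_Iio, lift_lt_omega1]

lemma mk_image_lift_eq_aleph_one {s : Set Ordinal.{u}} :
    #(Ordinal.lift.{v} '' s) = ℵ₁ ↔ #s = ℵ₁ := by
  rw [← Cardinal.lift_eq_aleph_one.{max u v + 1, u + 1},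
    Cardinal.mk_image_eq_lift _ s Ordinal.lift_injective, Cardinal.lift_eq_aleph_one]

lemma hasOtpOmega_image_lift {s : Set Ordinal.{u}} :
    HasOtpOmega (Ordinal.lift.{v} '' s) ↔ HasOtpOmega s := by
  have e : Subrel (· < ·) (· ∈ s) ≃r Subrel (· < ·) (· ∈ Ordinal.lift.{v} '' s) :=
    (StrictMonoOn.orderIso Ordinal.lift.{v} s fun _ _ _ _ => Ordinal.lift_lt.2).toRelIsoLT
  unfold HasOtpOmega
  rw [← Ordinal.lift_inj.{u + 1} (b := Ordinal.omega0), Ordinal.lift_omega0,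
    ← e.ordinal_lift_type_eq, ← Ordinal.lift_omega0.{max (u + 1) (v + 1), u + 1}, Ordinal.lift_inj]

lemma isLadderAt_image_lift {γ : Ordinal.{u}} {s : Set Ordinal.{u}} :
    IsLadderAt (Ordinal.lift.{v} γ) (Ordinal.lift.{v} '' s) ↔ IsLadderAt γ s := by
  refine and_congr ?_ (and_congr ?_ hasOtpOmega_image_lift)
  · simp only [subset_def, forall_mem_image, mem_Iio, Ordinal.lift_lt]
  · refine ⟨fun h α hα => ?_, fun h α hα => ?_⟩
    · obtain ⟨_, ⟨β, hβs, rfl⟩, hαβ⟩ := h _ (Ordinal.lift_lt.2 hα)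
      exact ⟨β, hβs, Ordinal.lift_le.1 hαβ⟩
    · obtain ⟨α₀, hα₀, rfl⟩ := Ordinal.lt_lift_iff.1 hα
      obtain ⟨β, hβs, hαβ⟩ := h α₀ hα₀
      exact ⟨_, mem_image_of_mem _ hβs, Ordinal.lift_le.2 hαβ⟩

lemma IsLadderAt.preimage_lift {γ : Ordinal.{u}} {s : Set Ordinal.{max u v}}
    (h : IsLadderAt (Ordinal.lift.{v} γ) s) : IsLadderAt γ (Ordinal.lift.{v} ⁻¹' s) := by
  rw [← isLadderAt_image_lift, image_preimage_lift_of_subset_Iio h.1]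
  exact h

lemma IsClubIn.preimage_lift {C : Set Ordinal.{max u v}} (hC : IsClubIn C) :
    IsClubIn (Ordinal.lift.{v, u} ⁻¹' C) := by
  refine ⟨fun α hα => lift_lt_omega1.1 (hC.1 hα), fun δ hδ hδ0 hδC => ?_, fun α hα => ?_⟩
  · have hδ0' := (Ordinal.lift_injective.ne_iff' Ordinal.lift_zero).2 hδ0
    refine hC.2.1 _ (lift_lt_omega1.2 hδ) hδ0' fun α hα => ?_
    obtain ⟨α₀, hα₀, rfl⟩ := Ordinal.lt_lift_iff.1 hα
    obtain ⟨β, hβC, hαβ, hβδ⟩ := hδC α₀ hα₀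
    exact ⟨_, hβC, Ordinal.lift_lt.2 hαβ, Ordinal.lift_lt.2 hβδ⟩
  · obtain ⟨β, hβC, hαβ⟩ := hC.2.2 _ (lift_lt_omega1.2 hα)
    obtain ⟨β₀, rfl⟩ := mem_range_lift_of_lt_omega1.{u, v} (hC.1 hβC)
    exact ⟨β₀, hβC, Ordinal.lift_lt.1 hαβ⟩

lemma IsStatIn.mono {S T : Set Ordinal} (hS : IsStatIn S) (hST : S ⊆ T) (hT : T ⊆ Iio ω₁) :
    IsStatIn T :=
  ⟨hT, fun C hC => (hS.2 C hC).mono (inter_subset_inter_left C hST)⟩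

lemma IsStatIn.image_lift {S : Set Ordinal.{u}} (hS : IsStatIn S) :
    IsStatIn (Ordinal.lift.{v} '' S) := by
  refine ⟨image_lift_subset_Iio_omega1.2 hS.1, fun C hC => ?_⟩
  obtain ⟨α, hαS, hαC⟩ := hS.2 _ hC.preimage_lift
  exact ⟨_, mem_image_of_mem _ hαS, hαC⟩

lemma ClubWSeq.preimage_lift {x : Ordinal.{max u v} → Set Ordinal.{max u v}} (hx : ClubWSeq x) :
    ClubWSeq fun γ : Ordinal.{u} => Ordinal.lift.{v} ⁻¹' x (Ordinal.lift γ) := by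
  refine ⟨fun γ hγ => (hx.1 _ (lift_mem_limOmega1.2 hγ)).preimage_lift, fun y hy hyc => ?_⟩
  obtain ⟨γ, hγ, hfin⟩ :=
    hx.2 _ (image_lift_subset_Iio_omega1.2 hy) (mk_image_lift_eq_aleph_one.2 hyc)
  obtain ⟨γ₀, rfl⟩ := mem_range_lift_of_lt_omega1.{u, v} hγ.1
  refine ⟨γ₀, lift_mem_limOmega1.1 hγ, ?_⟩
  rw [← preimage_image_eq y Ordinal.lift_injective, ← preimage_sdiff]
  exact hfin.preimage Ordinal.lift_injective.injOn

lemma ClubW2Seq.image_lift {x : Ordinal.{u} → Set Ordinal.{u}} (hx : ClubW2Seq x) :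
    ClubW2Seq (Function.extend Ordinal.lift.{v} (fun γ => Ordinal.lift.{v} '' x γ) fun _ => ∅) := by
  have hext (γ : Ordinal.{u}) : Function.extend Ordinal.lift.{v} (fun γ => Ordinal.lift.{v} '' x γ)
      (fun _ => ∅) (Ordinal.lift γ) = Ordinal.lift '' x γ :=
    Ordinal.lift_injective.extend_apply _ _ γ
  refine ⟨fun γ hγ => ?_, fun y hy hyc => ?_⟩
  · obtain ⟨γ₀, rfl⟩ := mem_range_lift_of_lt_omega1.{u, v} hγ.1
    rw [hext, isLadderAt_image_lift]
    exact hx.1 γ₀ (lift_mem_limOmega1.1 hγ)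
  obtain ⟨y₀, rfl⟩ : ∃ y₀, Ordinal.lift '' y₀ = y :=
    ⟨_, image_preimage_lift_of_subset_Iio.{u, v} (γ := ω₁) (by rwa [lift_omega1])⟩
  refine (hx.2 y₀ (image_lift_subset_Iio_omega1.1 hy)
    (mk_image_lift_eq_aleph_one.1 hyc)).image_lift.mono ?_ ?_
  · rintro _ ⟨α, hα | hα, rfl⟩
    · refine Or.inl ⟨lift_mem_limOmega1.2 hα.1, ?_⟩
      rw [hext, ← image_inter Ordinal.lift_injective]
      exact hα.2.image _
    · refine Or.inr ⟨lift_mem_limOmega1.2 hα.1, ?_⟩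
      rw [hext, ← image_sdiff Ordinal.lift_injective]
      exact hα.2.image _
  · rintro α (hα | hα) <;> exact hα.1.1

theorem clubW_implies_clubW2 (h : ∃ x, ClubWSeq x) : ∃ x, ClubW2Seq x := by
  obtain ⟨x, hx⟩ := h
  exact ⟨_, (hx.preimage_lift.{0}).clubW2Seq.image_lift⟩
end

section
/- Let λ be an uncountable cardinal and μ a cardinal. Suppose (A_i)_{i<μ} is a family of subsets of λ, each of cardinality ℵ₁, such that A_i ∩ A_j is finite whenever i ≠ j. Then every 𝔰𝔱_λ-set has cardinality at least μ; consequently 𝔰𝔱_λ ≥ μ. -/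
open Cardinal Set

/-- `X` is a `𝔰𝔱_l`-family on (the canonical type of order type) `l`:
a collection of countably infinite subsets of `l` such that every subset of
cardinality `ℵ₁` contains a member of `X`. -/
def IsStickFam (l : Cardinal) (X : Set (Set l.ord.ToType)) : Prop :=
  (∀ x ∈ X, #x = ℵ₀) ∧
    ∀ y : Set l.ord.ToType, #y = aleph 1 → ∃ x ∈ X, x ⊆ y

/-- The cardinal `𝔰𝔱_l`. -/
noncomputable def stickL (l : Cardinal) : Cardinal :=
  sInf {c | ∃ X : Set (Set l.ord.ToType), IsStickFam l X ∧ #X = c}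

/-- The cardinal `𝔰𝔱` (`= 𝔰𝔱_{ℵ₁}`). -/
noncomputable def stick : Cardinal := stickL (aleph 1)

/-- The cardinal `𝔰𝔱'`: the least `κ ≥ ℵ₁` carrying a stick family of size `κ`. -/
noncomputable def stick' : Cardinal :=
  sInf {k | aleph 1 ≤ k ∧ ∃ X : Set (Set k.ord.ToType), IsStickFam k X ∧ #X = k}

/- Each `A i` has size `ℵ₁`, so a `𝔰𝔱_l`-set contains an infinite `x i ⊆ A i`; since the `A i`
are almost disjoint, `i ↦ x i` is injective. -/

universe u v

theorem injective_of_almost_disjoint_of_infinite_subset {ι α : Type*} {A : ι → Set α}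
    (hdisj : ∀ i j, i ≠ j → (A i ∩ A j).Finite) {x : ι → Set α} (hinf : ∀ i, (x i).Infinite)
    (hsub : ∀ i, x i ⊆ A i) : Function.Injective x := by
  intro i j hij
  by_contra hne
  exact hinf i ((hdisj i j hne).subset fun a ha => ⟨hsub i ha, hsub j (hij ▸ ha)⟩)

theorem lift_mk_le_of_almost_disjoint_of_forall_exists_subset {ι : Type u} {α : Type v}
    {A : ι → Set α} (hdisj : ∀ i j, i ≠ j → (A i ∩ A j).Finite)
    {X : Set (Set α)} (hX : ∀ x ∈ X, x.Infinite)
    (hhit : ∀ i, ∃ x ∈ X, x ⊆ A i) : lift.{v} #ι ≤ lift.{u} #X := by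
  choose x hxX hxA using hhit
  have hinj : Function.Injective x :=
    injective_of_almost_disjoint_of_infinite_subset hdisj (fun i => hX _ (hxX i)) hxA
  exact lift_mk_le_lift_mk_of_injective (f := fun i => (⟨x i, hxX i⟩ : X))
    fun i j hij => hinj (congrArg Subtype.val hij)

theorem IsStickFam.infinite_of_mem {l : Cardinal} {X : Set (Set l.ord.ToType)}
    (hX : IsStickFam l X) {x : Set l.ord.ToType} (hx : x ∈ X) : x.Infinite := by
  rw [← Set.infinite_coe_iff, ← aleph0_le_mk_iff, hX.1 x hx]

theorem isStickFam_setOf_mk_eq_aleph0 (l : Cardinal) : IsStickFam l {x | #x = ℵ₀} := by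
  refine ⟨fun x hx => hx, fun y hy => ?_⟩
  obtain ⟨x, hxy, hx⟩ := le_mk_iff_exists_subset.mp (hy ▸ aleph0_le_aleph 1 : ℵ₀ ≤ #y)
  exact ⟨x, hx, hxy⟩

theorem mu_le_stickL_of_almost_disjoint_family_general (l μ : Cardinal)
    (A : μ.ord.ToType → Set l.ord.ToType)
    (hA : ∀ i, #(A i) = aleph 1)
    (hdisj : ∀ i j, i ≠ j → (A i ∩ A j).Finite) :
    (∀ X : Set (Set l.ord.ToType), IsStickFam l X → μ ≤ #X) ∧ μ ≤ stickL l := by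
  have hbound : ∀ X : Set (Set l.ord.ToType), IsStickFam l X → μ ≤ #X := fun X hX => by
    simpa using lift_mk_le_of_almost_disjoint_of_forall_exists_subset hdisj
      (fun x hx => hX.infinite_of_mem hx) fun i => hX.2 (A i) (hA i)
  refine ⟨hbound, le_csInf ⟨_, _, isStickFam_setOf_mk_eq_aleph0 l, rfl⟩ ?_⟩
  rintro c ⟨X, hX, rfl⟩
  exact hbound X hX

theorem mu_le_stickL_of_almost_disjoint_family (l μ : Cardinal) (hl : ℵ₀ < l)
    (A : μ.ord.ToType → Set l.ord.ToType)
    (hA : ∀ i, #(A i) = aleph 1)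
    (hdisj : ∀ i j, i ≠ j → (A i ∩ A j).Finite) :
    (∀ X : Set (Set l.ord.ToType), IsStickFam l X → μ ≤ #X) ∧ μ ≤ stickL l :=
  mu_le_stickL_of_almost_disjoint_family_general l μ A hA hdisj
end
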